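/- Fix p ∈ (1/2, 1) and let f_n be the cluster-size function at the root of the perfect binary tree of depth n. Then (2p)^{−2n} · var_p(f_n) converges, as n → ∞, to 4p²(1−p)/(2p−1)³, where var_p(f_n) = Σ_{∅≠A⊆B_n} ⟨f_n, Ψ_A^{p,B_n}⟩². -/

import Mathlib

open Finset Filter

noncomputable section
open scoped Classical

/-- Edges on the path from the root to vertex `v`, in heap indexing of the infinite binary
tree: the root is `0`, the children of `v` are `2v+1` and `2v+2`, and each non-root vertex
is identified with the edge joining it to its parent `(v−1)/2`. -/
def pathSet : ℕ → Finset ℕ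
  | 0 => ∅
  | (v + 1) => insert (v + 1) (pathSet (v / 2))
decreasing_by exact Nat.lt_succ_of_le (Nat.div_le_self v 2)

/-- The depth of vertex `v`. -/
def depth (v : ℕ) : ℕ := Nat.log2 (v + 1)

/-- The edge set B_n of the perfect binary tree of depth `n` (its vertex set is
{0,…,2^{n+1}−2} and each non-root vertex is identified with the edge to its parent),
so |B_n| = 2^{n+1} − 2. -/
def Eset (n : ℕ) : Finset ℕ := Finset.Icc 1 (2 ^ (n + 1) - 2)

/-- ν_p = √((1-p)/p). -/
def nu (p : ℝ) : ℝ := Real.sqrt ((1 - p) / p)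

/-- Ψ_A^{p,B_n}(x) = Π_{i∈A} x_i ν_p^{x_i}: a configuration is encoded by the set `x` of
open edges; the factor is ν_p when the edge is open (+1) and −ν_p⁻¹ when closed (−1). -/
def PsiT (p : ℝ) (A x : Finset ℕ) : ℝ :=
  ∏ i ∈ A, (if i ∈ x then nu p else -(nu p)⁻¹)

/-- The Bernoulli product measure π_{p,B_n} of the configuration with open-edge set `x`. -/
def piT (p : ℝ) (n : ℕ) (x : Finset ℕ) : ℝ :=
  p ^ x.card * (1 - p) ^ ((Eset n).card - x.card)

/-- The inner product ⟨f,g⟩_{p,B_n} = Σ_{x⊆B_n} f(x) g(x) π_{p,B_n}(x). -/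
def innT (p : ℝ) (n : ℕ) (f g : Finset ℕ → ℝ) : ℝ :=
  ∑ x ∈ (Eset n).powerset, f x * g x * piT p n x

/-- The cluster-size function f_n(x) = Σ_{v∈V_n} Π_{e∈P_v} (1+x_e)/2: the number of
vertices of the depth-n perfect binary tree joined to the root by open edges. -/
def fcl (n : ℕ) (x : Finset ℕ) : ℝ :=
  ∑ v ∈ Finset.range (2 ^ (n + 1) - 1), ∏ e ∈ pathSet v, (if e ∈ x then (1 : ℝ) else 0)

/-- var_p(f_n) = Σ_{∅≠A⊆B_n} ⟨f_n,Ψ_A⟩². -/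
def varT (p : ℝ) (n : ℕ) : ℝ :=
  ∑ A ∈ (Eset n).powerset.filter (fun A => A.Nonempty), (innT p n (fcl n) (PsiT p A)) ^ 2

/-- g_{p,n}(d). -/
def gtree (p : ℝ) (n d : ℕ) : ℝ :=
  if p = 1 / 2 then ((2 : ℝ) ^ (2 * d))⁻¹ * ((n + 1 - d : ℕ) : ℝ) ^ 2
  else p ^ (2 * d) * ((1 - (2 * p) ^ (n + 1 - d)) / (1 - 2 * p)) ^ 2

lemma mem_pathSet_iff {v w : ℕ} : w ∈ pathSet v ↔ 1 ≤ w ∧ ∃ k, (v + 1) / 2 ^ k = w + 1 := by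
  induction v using Nat.strong_induction_on with
  | _ v ih =>
    match v with
    | 0 =>
      simp only [pathSet, Finset.notMem_empty, false_iff]
      rintro ⟨hw, k, hk⟩
      have h1 : (0:ℕ) + 1 = 1 := rfl
      rw [h1] at hk
      have : (1:ℕ) / 2 ^ k ≤ 1 := Nat.div_le_self _ _
      omega
    | v + 1 =>
      rw [pathSet, Finset.mem_insert, ih (v / 2) (by omega)]
      have key : ∀ k, (v + 1 + 1) / 2 ^ (k + 1) = (v / 2 + 1) / 2 ^ k := by
        intro k
        rw [pow_succ', ← Nat.div_div_eq_div_mul]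
        congr 1
        omega
      constructor
      · rintro (rfl | ⟨hw, k, hk⟩)
        · exact ⟨by omega, 0, by simp⟩
        · exact ⟨hw, k + 1, by rw [key]; exact hk⟩
      · rintro ⟨hw, k, hk⟩
        match k with
        | 0 => left; simpa using hk.symm
        | k + 1 => right; exact ⟨hw, k, by rw [← key]; exact hk⟩

lemma pathSet_pos {v w : ℕ} (h : w ∈ pathSet v) : 1 ≤ w := (mem_pathSet_iff.1 h).1

lemma pathSet_le {v w : ℕ} (h : w ∈ pathSet v) : w ≤ v := by
  obtain ⟨hw, k, hk⟩ := mem_pathSet_iff.1 h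
  have := Nat.div_le_self (v + 1) (2 ^ k)
  omega

lemma self_mem_pathSet {m : ℕ} (h : 1 ≤ m) : m ∈ pathSet m :=
  mem_pathSet_iff.2 ⟨h, 0, by simp⟩

lemma pathSet_mono {m v : ℕ} (h : m ∈ pathSet v) : pathSet m ⊆ pathSet v := by
  intro w hw
  obtain ⟨hm, k, hk⟩ := mem_pathSet_iff.1 h
  obtain ⟨hw1, j, hj⟩ := mem_pathSet_iff.1 hw
  exact mem_pathSet_iff.2 ⟨hw1, k + j, by
    rw [pow_add, ← Nat.div_div_eq_div_mul, hk, hj]⟩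

lemma mem_pathSet_of_le {v w m : ℕ} (hw : w ∈ pathSet v) (hm : m ∈ pathSet v) (hwm : w ≤ m) :
    w ∈ pathSet m := by
  obtain ⟨hw1, a, ha⟩ := mem_pathSet_iff.1 hw
  obtain ⟨hm1, b, hb⟩ := mem_pathSet_iff.1 hm
  rcases le_or_gt b a with hba | hab
  · refine mem_pathSet_iff.2 ⟨hw1, a - b, ?_⟩
    rw [← hb, Nat.div_div_eq_div_mul, ← pow_add, Nat.add_sub_cancel' hba, ha]
  · have h2 : (2:ℕ) ^ a ≤ 2 ^ b := Nat.pow_le_pow_right (by norm_num) hab.le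
    have h3 : (v + 1) / 2 ^ b ≤ (v + 1) / 2 ^ a :=
      Nat.div_le_div_left h2 (pow_pos (by norm_num) a)
    rw [ha, hb] at h3
    have : w = m := by omega
    
    subst this
    exact self_mem_pathSet hw1

lemma depth_succ (v : ℕ) : depth (v + 1) = depth (v / 2) + 1 := by
  show Nat.log2 (v + 2) = Nat.log2 (v / 2 + 1) + 1
  rw [Nat.log2_def]
  simp only [show 2 ≤ v + 2 by omega, if_pos]
  congr 2
  omega

lemma card_pathSet (v : ℕ) : (pathSet v).card = depth v := by
  induction v using Nat.strong_induction_on with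
  | _ v ih =>
    match v with
    | 0 => show (pathSet 0).card = Nat.log2 1; rw [Nat.log2_def]; simp [pathSet]
    | v + 1 =>
      rw [pathSet, Finset.card_insert_of_notMem, ih (v / 2) (by omega), depth_succ]
      intro h
      have := pathSet_le h
      omega

lemma depth_eq_iff {m d : ℕ} : depth m = d ↔ 2 ^ d ≤ m + 1 ∧ m + 1 < 2 ^ (d + 1) := by
  rw [depth, Nat.log2_eq_log_two]
  constructor
  · rintro rfl
    exact ⟨Nat.pow_log_le_self 2 (by omega), Nat.lt_pow_succ_log_self (by norm_num) _⟩
  · rintro ⟨h1, h2⟩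
    exact Nat.log_eq_of_pow_le_of_lt_pow h1 h2

lemma depth_le_of_mem {m v : ℕ} (h : m ∈ pathSet v) : depth m ≤ depth v :=
  card_pathSet m ▸ card_pathSet v ▸ Finset.card_le_card (pathSet_mono h)

lemma nat_div_eq_iff {a b k : ℕ} (hb : 0 < b) : a / b = k ↔ k * b ≤ a ∧ a < (k + 1) * b := by
  constructor
  · rintro rfl
    refine ⟨Nat.div_mul_le_self a b, ?_⟩
    have h1 := Nat.div_add_mod a b
    have h2 := Nat.mod_lt a hb
    nlinarith [h1, h2]
  · rintro ⟨h1, h2⟩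
    have h3 : k ≤ a / b := (Nat.le_div_iff_mul_le hb).2 h1
    have h4 : a / b < k + 1 := (Nat.div_lt_iff_lt_mul hb).2 h2
    omega

lemma mem_pathSet_iff' {v m : ℕ} (hm : 1 ≤ m) :
    m ∈ pathSet v ↔ ∃ t, 2 ^ t * (m + 1) ≤ v + 1 ∧ v + 1 < 2 ^ t * (m + 2) := by
  rw [mem_pathSet_iff]
  constructor
  · rintro ⟨-, k, hk⟩
    rw [nat_div_eq_iff (pow_pos (by norm_num) k)] at hk
    exact ⟨k, by rw [mul_comm]; exact hk.1, by rw [mul_comm]; exact hk.2⟩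
  · rintro ⟨t, h1, h2⟩
    refine ⟨hm, t, ?_⟩
    rw [nat_div_eq_iff (pow_pos (by norm_num) t)]
    exact ⟨by rw [mul_comm]; exact h1, by rw [mul_comm]; exact h2⟩

lemma depth_of_interval {v m t : ℕ} (h1 : 2 ^ t * (m + 1) ≤ v + 1) (h2 : v + 1 < 2 ^ t * (m + 2)) :
    depth v = depth m + t := by
  obtain ⟨hm1, hm2⟩ := depth_eq_iff.1 (rfl : depth m = depth m)
  rw [depth_eq_iff]
  constructor
  · calc 2 ^ (depth m + t) = 2 ^ t * 2 ^ (depth m) := by rw [pow_add, mul_comm]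
      _ ≤ 2 ^ t * (m + 1) := by gcongr
      _ ≤ v + 1 := h1
  · calc v + 1 < 2 ^ t * (m + 2) := h2
      _ ≤ 2 ^ t * 2 ^ (depth m + 1) := by gcongr; omega
      _ = 2 ^ (depth m + t + 1) := by rw [← pow_add]; ring_nf

lemma descendants_eq (m n : ℕ) (hm : 1 ≤ m) :
    (Finset.range (2 ^ (n + 1) - 1)).filter (fun v => m ∈ pathSet v)
      = (Finset.range (n + 1 - depth m)).biUnion
          (fun t => Finset.Ico (2 ^ t * (m + 1) - 1) (2 ^ t * (m + 1) + 2 ^ t - 1)) := by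
  ext v
  simp only [Finset.mem_filter, Finset.mem_range, Finset.mem_biUnion, Finset.mem_Ico]
  constructor
  · rintro ⟨hv, hpath⟩
    obtain ⟨t, h1, h2⟩ := (mem_pathSet_iff' hm).1 hpath
    have hd := depth_of_interval h1 h2
    have hvn : v + 1 < 2 ^ (n + 1) := by
      have : (2:ℕ) ^ (n+1) ≥ 1 := Nat.one_le_two_pow
      omega
    have hdv : depth v ≤ n := by
      by_contra hc
      push_neg at hc
      have : 2 ^ (n + 1) ≤ 2 ^ (depth v) := Nat.pow_le_pow_right (by norm_num) (by omega)
      have := (depth_eq_iff.1 (rfl : depth v = depth v)).1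
      omega
    refine ⟨t, by omega, by omega, by
      have : 2 ^ t * (m + 2) = 2 ^ t * (m + 1) + 2 ^ t := by ring
      omega⟩
  · rintro ⟨t, ht, h1, h2⟩
    have hp : (1:ℕ) ≤ 2 ^ t * (m + 1) := Nat.one_le_iff_ne_zero.2 (by positivity)
    have h1' : 2 ^ t * (m + 1) ≤ v + 1 := by omega
    have h2' : v + 1 < 2 ^ t * (m + 2) := by
      have : 2 ^ t * (m + 2) = 2 ^ t * (m + 1) + 2 ^ t := by ring
      omega
    have hd := depth_of_interval h1' h2'
    have hdm := (depth_eq_iff.1 (rfl : depth m = depth m)).2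
    have hvlt : v + 1 < 2 ^ (n + 1) := by
      calc v + 1 < 2 ^ t * (m + 2) := h2'
        _ ≤ 2 ^ t * 2 ^ (depth m + 1) := by gcongr; omega
        _ = 2 ^ (depth m + t + 1) := by rw [← pow_add]; ring_nf
        _ ≤ 2 ^ (n + 1) := Nat.pow_le_pow_right (by norm_num) (by omega)
    have : (2:ℕ) ^ (n+1) ≥ 1 := Nat.one_le_two_pow
    exact ⟨by omega, (mem_pathSet_iff' hm).2 ⟨t, h1', h2'⟩⟩

lemma descendants_disjoint (m : ℕ) (hm : 1 ≤ m) {s t : ℕ} (hst : s ≠ t) :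
    Disjoint (Finset.Ico (2 ^ s * (m + 1) - 1) (2 ^ s * (m + 1) + 2 ^ s - 1))
      (Finset.Ico (2 ^ t * (m + 1) - 1) (2 ^ t * (m + 1) + 2 ^ t - 1)) := by
  have key : ∀ s t : ℕ, s < t → Disjoint (Finset.Ico (2 ^ s * (m + 1) - 1) (2 ^ s * (m + 1) + 2 ^ s - 1))
      (Finset.Ico (2 ^ t * (m + 1) - 1) (2 ^ t * (m + 1) + 2 ^ t - 1)) := by
    intro s t h
    rw [Finset.disjoint_left]
    intro v hv1 hv2
    simp only [Finset.mem_Ico] at hv1 hv2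
    have e1 : 2 ^ s * (m + 1) + 2 ^ s = 2 ^ s * (m + 2) := by ring
    have e2 : 2 ^ s * (m + 2) ≤ 2 ^ (s + 1) * (m + 1) := by
      rw [pow_succ]
      have : 2 ^ s * (m + 2) ≤ 2 ^ s * (2 * (m + 1)) := by gcongr <;> omega
      linarith [this]
    have e3 : 2 ^ (s + 1) * (m + 1) ≤ 2 ^ t * (m + 1) :=
      Nat.mul_le_mul_right (m + 1) (Nat.pow_le_pow_right (by norm_num) (by omega))
    have hp : (1:ℕ) ≤ 2 ^ t * (m + 1) := Nat.one_le_iff_ne_zero.2 (by positivity)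
    have hp2 : (1:ℕ) ≤ 2 ^ s * (m + 1) := Nat.one_le_iff_ne_zero.2 (by positivity)
    omega
  rcases hst.lt_or_gt with h | h
  · exact key s t h
  · exact (key t s h).symm

lemma sum_descendants (g : ℕ → ℝ) (m n : ℕ) (hm : 1 ≤ m) :
    ∑ v ∈ (Finset.range (2 ^ (n + 1) - 1)).filter (fun v => m ∈ pathSet v), g (depth v)
      = ∑ t ∈ Finset.range (n + 1 - depth m), (2:ℝ) ^ t * g (depth m + t) := by
  rw [descendants_eq m n hm, Finset.sum_biUnion]
  · refine Finset.sum_congr rfl fun t _ => ?_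
    have hp : (1:ℕ) ≤ 2 ^ t * (m + 1) := Nat.one_le_iff_ne_zero.2 (by positivity)
    have ht1 : (1:ℕ) ≤ 2 ^ t := Nat.one_le_two_pow
    have hcard : (Finset.Ico (2 ^ t * (m + 1) - 1) (2 ^ t * (m + 1) + 2 ^ t - 1)).card = 2 ^ t := by
      rw [Nat.card_Ico]; omega
    rw [Finset.sum_congr rfl (g := fun _ => g (depth m + t)) (fun v hv => by
      simp only [Finset.mem_Ico] at hv
      congr 1
      refine depth_of_interval (by omega) ?_
      have : 2 ^ t * (m + 2) = 2 ^ t * (m + 1) + 2 ^ t := by ring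
      omega)]
    rw [Finset.sum_const, hcard, nsmul_eq_mul]
    push_cast
    ring
  · intro s _ t _ hst
    exact descendants_disjoint m hm hst

lemma depth_fiber_card (n d : ℕ) (hd1 : 1 ≤ d) (hdn : d ≤ n) :
    ((Eset n).filter (fun m => depth m = d)).card = 2 ^ d := by
  have hset : (Eset n).filter (fun m => depth m = d) = Finset.Ico (2 ^ d - 1) (2 ^ (d + 1) - 1) := by
    ext m
    simp only [Eset, Finset.mem_filter, Finset.mem_Icc, Finset.mem_Ico]
    have h2d : (2:ℕ) ≤ 2 ^ d := by
      calc (2:ℕ) = 2 ^ 1 := rfl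
        _ ≤ 2 ^ d := Nat.pow_le_pow_right (by norm_num) hd1
    have hdd : (2:ℕ) ^ (d + 1) ≤ 2 ^ (n + 1) := Nat.pow_le_pow_right (by norm_num) (by omega)
    rw [depth_eq_iff]
    omega
  rw [hset, Nat.card_Ico]
  have h1 : (1:ℕ) ≤ 2 ^ d := Nat.one_le_two_pow
  have : (2:ℕ) ^ (d + 1) = 2 * 2 ^ d := by rw [pow_succ]; ring
  omega

lemma myProdIndicator (s x : Finset ℕ) :
    (∏ e ∈ s, (if e ∈ x then (1:ℝ) else 0)) = if s ⊆ x then 1 else 0 := by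
  split_ifs with h
  · exact Finset.prod_eq_one fun e he => if_pos (h he)
  · obtain ⟨e, he, hex⟩ := Finset.not_subset.1 h
    exact Finset.prod_eq_zero he (if_neg hex)

lemma myProdIteSplit {E x : Finset ℕ} (hx : x ⊆ E) (F G : ℕ → ℝ) :
    (∏ i ∈ E, (if i ∈ x then F i else G i)) = (∏ i ∈ x, F i) * ∏ i ∈ E \ x, G i := by
  rw [Finset.prod_ite]
  congr 1
  · congr 1
    rw [Finset.filter_mem_eq_inter, Finset.inter_eq_right.2 hx]
  · congr 1
    rw [Finset.sdiff_eq_filter]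

lemma mySumPowersetProdIte (s : Finset ℕ) (F G : ℕ → ℝ) :
    ∑ x ∈ s.powerset, ∏ i ∈ s, (if i ∈ x then F i else G i) = ∏ i ∈ s, (F i + G i) := by
  rw [Finset.prod_add]
  exact Finset.sum_congr rfl fun x hx => myProdIteSplit (Finset.mem_powerset.1 hx) F G

lemma myProdIndicatorSdiff {E x s : Finset ℕ} (hs : s ⊆ E) (hx : x ⊆ E) :
    (∏ i ∈ E \ x, (if i ∈ s then (0:ℝ) else 1)) = if s ⊆ x then 1 else 0 := by
  split_ifs with h
  · refine Finset.prod_eq_one fun i hi => ?_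
    rw [Finset.mem_sdiff] at hi
    exact if_neg fun his => hi.2 (h his)
  · obtain ⟨e, he, hex⟩ := Finset.not_subset.1 h
    exact Finset.prod_eq_zero (Finset.mem_sdiff.2 ⟨hs he, hex⟩) (if_pos he)

lemma myPsiSplit {E A x : Finset ℕ} (hA : A ⊆ E) (hx : x ⊆ E) (a b : ℝ) :
    (∏ i ∈ A, (if i ∈ x then a else b))
      = (∏ i ∈ x, (if i ∈ A then a else 1)) * ∏ i ∈ E \ x, (if i ∈ A then b else 1) := by
  rw [Finset.prod_ite, Finset.prod_ite, Finset.prod_ite]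
  simp only [Finset.prod_const_one, mul_one]
  have e1 : x.filter (fun i => i ∈ A) = A.filter (fun i => i ∈ x) := by
    ext i; simp only [Finset.mem_filter]; tauto
  have e2 : (E \ x).filter (fun i => i ∈ A) = A.filter (fun i => i ∉ x) := by
    ext i
    simp only [Finset.mem_filter, Finset.mem_sdiff]
    constructor
    · rintro ⟨⟨-, h2⟩, h3⟩; exact ⟨h3, h2⟩
    · rintro ⟨h1, h2⟩; exact ⟨⟨hA h1, h2⟩, h1⟩
  rw [e1, e2]

lemma innT_eq (p : ℝ) (hp0 : 0 < p) (hp1 : p < 1) (n : ℕ) (A : Finset ℕ) (hA : A ⊆ Eset n) :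
    innT p n (fcl n) (PsiT p A) =
      ∑ v ∈ Finset.range (2 ^ (n + 1) - 1),
        (if A ⊆ pathSet v then (p * nu p) ^ A.card * p ^ ((pathSet v).card - A.card) else 0) := by
  have hfrac : 0 < (1 - p) / p := div_pos (by linarith) hp0
  have hnu : 0 < nu p := Real.sqrt_pos.2 hfrac
  have hnusq : nu p ^ 2 = (1 - p) / p := Real.sq_sqrt hfrac.le
  have hnusq' : nu p ^ 2 * p = 1 - p := by
    rw [hnusq]; field_simp
  set F : ℕ → ℝ := fun i => (if i ∈ A then nu p else 1) * p with hF
  unfold innT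
  have step1 : ∀ x ∈ (Eset n).powerset, fcl n x * PsiT p A x * piT p n x
      = ∑ v ∈ Finset.range (2 ^ (n + 1) - 1),
          (if pathSet v ⊆ x then (1:ℝ) else 0) * (PsiT p A x * piT p n x) := by
    intro x hx
    unfold fcl
    rw [Finset.sum_mul, Finset.sum_mul]
    refine Finset.sum_congr rfl fun v _ => ?_
    rw [myProdIndicator, mul_assoc]
  rw [Finset.sum_congr rfl step1, Finset.sum_comm]
  refine Finset.sum_congr rfl fun v hv => ?_
  have hPv : pathSet v ⊆ Eset n := by
    intro e he
    have h1 := pathSet_pos he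
    have h2 := pathSet_le he
    have h3 := Finset.mem_range.1 hv
    simp only [Eset, Finset.mem_Icc]
    omega
  set Gv : ℕ → ℝ := fun i =>
    (if i ∈ pathSet v then (0:ℝ) else 1) * (if i ∈ A then -(nu p)⁻¹ else 1) * (1 - p) with hGv
  have step2 : ∀ x ∈ (Eset n).powerset,
      (if pathSet v ⊆ x then (1:ℝ) else 0) * (PsiT p A x * piT p n x)
        = ∏ i ∈ Eset n, (if i ∈ x then F i else Gv i) := by
    intro x hx
    have hxE : x ⊆ Eset n := Finset.mem_powerset.1 hx
    rw [myProdIteSplit hxE]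
    have e1 : (∏ i ∈ x, F i) = (∏ i ∈ x, (if i ∈ A then nu p else 1)) * p ^ x.card := by
      rw [hF, Finset.prod_mul_distrib, Finset.prod_const]
    have e2 : (∏ i ∈ Eset n \ x, Gv i)
        = (if pathSet v ⊆ x then (1:ℝ) else 0)
          * (∏ i ∈ Eset n \ x, (if i ∈ A then -(nu p)⁻¹ else 1))
          * (1 - p) ^ ((Eset n).card - x.card) := by
      rw [hGv]
      simp only
      rw [Finset.prod_mul_distrib, Finset.prod_mul_distrib, Finset.prod_const,
        myProdIndicatorSdiff hPv hxE, Finset.card_sdiff_of_subset hxE]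
    rw [e1, e2, PsiT, myPsiSplit hA hxE, piT]
    ring
  rw [Finset.sum_congr rfl step2, mySumPowersetProdIte]
  by_cases hAv : A ⊆ pathSet v
  · rw [if_pos hAv]
    have hout : ∀ i ∈ Eset n, i ∉ pathSet v → F i + Gv i = 1 := by
      intro i _ hi
      have hiA : i ∉ A := fun h => hi (hAv h)
      simp only [hF, hGv, if_neg hiA, if_neg hi]
      ring
    rw [← Finset.prod_subset hPv (fun i hi hni => hout i hi hni)]
    rw [← Finset.prod_sdiff hAv]
    have eA : ∀ i ∈ A, F i + Gv i = p * nu p := by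
      intro i hi
      simp only [hF, hGv, if_pos hi, if_pos (hAv hi)]
      ring
    have ePA : ∀ i ∈ pathSet v \ A, F i + Gv i = p := by
      intro i hi
      rw [Finset.mem_sdiff] at hi
      simp only [hF, hGv, if_neg hi.2, if_pos hi.1]
      ring
    rw [Finset.prod_congr rfl eA, Finset.prod_congr rfl ePA, Finset.prod_const,
      Finset.prod_const, Finset.card_sdiff_of_subset hAv]
    ring
  · rw [if_neg hAv]
    obtain ⟨i0, hi0A, hi0P⟩ := Finset.not_subset.1 hAv
    refine Finset.prod_eq_zero (hA hi0A) ?_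
    simp only [hF, hGv, if_pos hi0A, if_neg hi0P]
    have : nu p * p - (nu p)⁻¹ * (1 - p) = 0 := by
      rw [← hnusq']
      field_simp
      ring
    linarith [this]

lemma mySumPowersetPowCard (s : Finset ℕ) (r : ℝ) :
    ∑ B ∈ s.powerset, r ^ B.card = (r + 1) ^ s.card := by
  calc ∑ B ∈ s.powerset, r ^ B.card
      = ∑ B ∈ s.powerset, (∏ _i ∈ B, r) * ∏ _i ∈ s \ B, (1:ℝ) := by
        refine Finset.sum_congr rfl fun B _ => ?_
        rw [Finset.prod_const, Finset.prod_const, one_pow, mul_one]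
    _ = ∏ _i ∈ s, (r + 1) := (Finset.prod_add _ _ s).symm
    _ = (r + 1) ^ s.card := Finset.prod_const _

lemma innT_sq_eq (p : ℝ) (hp0 : 0 < p) (hp1 : p < 1) (n : ℕ) (A : Finset ℕ)
    (hAE : A ⊆ Eset n) (hAne : A.Nonempty) :
    (innT p n (fcl n) (PsiT p A)) ^ 2 =
      if A ⊆ pathSet (A.sup id)
      then ((1 - p) * p) ^ A.card * (p ^ 2) ^ (depth (A.sup id) - A.card)
            * (∑ t ∈ Finset.range (n + 1 - depth (A.sup id)), (2 * p) ^ t) ^ 2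
      else 0 := by
  have hfrac : 0 < (1 - p) / p := div_pos (by linarith) hp0
  have hnusq : nu p ^ 2 = (1 - p) / p := Real.sq_sqrt hfrac.le
  have hpnu : (p * nu p) ^ 2 = (1 - p) * p := by
    rw [mul_pow, hnusq]; field_simp
  obtain ⟨m, hmA, hmsup⟩ := Finset.exists_mem_eq_sup A hAne id
  simp only [id] at hmsup
  rw [hmsup]
  have hm1 : 1 ≤ m := by
    have := hAE hmA
    simp only [Eset, Finset.mem_Icc] at this
    exact this.1
  have hle : ∀ w ∈ A, w ≤ m := by
    intro w hw
    have := Finset.le_sup (f := id) hw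
    rw [hmsup] at this
    exact this
  rw [innT_eq p hp0 hp1 n A hAE]
  by_cases hchain : A ⊆ pathSet m
  · rw [if_pos hchain]
    have hk : A.card ≤ depth m := by
      have := Finset.card_le_card hchain
      rwa [card_pathSet] at this
    have hcond : ∀ v, (A ⊆ pathSet v) ↔ (m ∈ pathSet v) := by
      intro v
      constructor
      · exact fun h => h hmA
      · exact fun h w hw => pathSet_mono h (hchain hw)
    have e1 : ∑ v ∈ Finset.range (2 ^ (n + 1) - 1),
          (if A ⊆ pathSet v then (p * nu p) ^ A.card * p ^ ((pathSet v).card - A.card) else 0)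
        = ∑ v ∈ (Finset.range (2 ^ (n + 1) - 1)).filter (fun v => m ∈ pathSet v),
            (p * nu p) ^ A.card * p ^ (depth v - A.card) := by
      rw [Finset.sum_filter]
      refine Finset.sum_congr rfl fun v _ => ?_
      rw [card_pathSet]
      exact if_congr (hcond v) rfl rfl
    rw [e1, sum_descendants (fun j => (p * nu p) ^ A.card * p ^ (j - A.card)) m n hm1]
    have e2 : ∀ t ∈ Finset.range (n + 1 - depth m),
        (2:ℝ) ^ t * ((p * nu p) ^ A.card * p ^ (depth m + t - A.card))
          = (p * nu p) ^ A.card * p ^ (depth m - A.card) * (2 * p) ^ t := by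
      intro t _
      have : depth m + t - A.card = (depth m - A.card) + t := by omega
      rw [this, pow_add, mul_pow]
      ring
    rw [Finset.sum_congr rfl e2, ← Finset.mul_sum]
    rw [mul_pow, mul_pow, ← pow_mul, ← pow_mul, mul_comm (A.card) 2, mul_comm (depth m - A.card) 2,
      pow_mul, pow_mul, hpnu]
  · rw [if_neg hchain]
    have : ∀ v ∈ Finset.range (2 ^ (n + 1) - 1),
        (if A ⊆ pathSet v then (p * nu p) ^ A.card * p ^ ((pathSet v).card - A.card) else 0) = 0 := by
      intro v _
      rw [if_neg]
      intro hAv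
      exact hchain fun w hw => mem_pathSet_of_le (hAv hw) (hAv hmA) (hle w hw)
    rw [Finset.sum_congr rfl this, Finset.sum_const, smul_zero]
    norm_num

lemma depth_mem_Icc {n m : ℕ} (hm : m ∈ Eset n) : depth m ∈ Finset.Icc 1 n := by
  simp only [Eset, Finset.mem_Icc] at hm ⊢
  obtain ⟨hd1, hd2⟩ := depth_eq_iff.1 (rfl : depth m = depth m)
  have h2 : (2:ℕ) ^ (n + 1) ≥ 2 := by
    calc (2:ℕ) ^ (n+1) ≥ 2 ^ 1 := Nat.pow_le_pow_right (by norm_num) (by omega)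
      _ = 2 := rfl
  constructor
  · rcases Nat.eq_zero_or_pos (depth m) with h | h
    · rw [h] at hd2; norm_num at hd2; omega
    · exact h
  · have hlt : (2:ℕ) ^ (depth m) < 2 ^ (n + 1) := by omega
    have := (Nat.pow_lt_pow_iff_right (a := 2) (by norm_num)).1 hlt
    omega

lemma fiber_sum_eq (p : ℝ) (hp0 : 0 < p) (hp1 : p < 1) (n : ℕ) (m : ℕ) (hm : m ∈ Eset n) :
    ∑ A ∈ ((Eset n).powerset.filter (fun A => A.Nonempty)).filter (fun A => A.sup id = m),
        (innT p n (fcl n) (PsiT p A)) ^ 2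
      = (1 - p) * p ^ (depth m)
          * (∑ t ∈ Finset.range (n + 1 - depth m), (2 * p) ^ t) ^ 2 := by
  have hm' : 1 ≤ m ∧ m ≤ 2 ^ (n + 1) - 2 := by simpa [Eset] using hm
  have hm1 : 1 ≤ m := hm'.1
  set d := depth m with hd
  set U := ∑ t ∈ Finset.range (n + 1 - d), (2 * p) ^ t with hU
  set c : ℕ → ℝ := fun k => ((1 - p) * p) ^ k * (p ^ 2) ^ (d - k) * U ^ 2 with hc
  have step1 : ∀ A ∈ ((Eset n).powerset.filter (fun A => A.Nonempty)).filter
        (fun A => A.sup id = m),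
      (innT p n (fcl n) (PsiT p A)) ^ 2 = if A ⊆ pathSet m then c A.card else 0 := by
    intro A hA
    simp only [Finset.mem_filter, Finset.mem_powerset] at hA
    obtain ⟨⟨hAE, hAne⟩, hsup⟩ := hA
    rw [innT_sq_eq p hp0 hp1 n A hAE hAne, hsup]
  rw [Finset.sum_congr rfl step1, ← Finset.sum_filter]
  have hsetP : pathSet m ⊆ Eset n := by
    intro e he
    have h1 := pathSet_pos he
    have h2 := pathSet_le he
    simp only [Eset, Finset.mem_Icc]
    omega
  have hself : m ∈ pathSet m := self_mem_pathSet hm1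
  have hset : (((Eset n).powerset.filter (fun A => A.Nonempty)).filter
        (fun A => A.sup id = m)).filter (fun A => A ⊆ pathSet m)
      = ((pathSet m).erase m).powerset.image (insert m) := by
    ext A
    simp only [Finset.mem_filter, Finset.mem_powerset, Finset.mem_image]
    constructor
    · rintro ⟨⟨⟨hAE, hAne⟩, hsup⟩, hchain⟩
      obtain ⟨b, hbA, hbsup⟩ := Finset.exists_mem_eq_sup A hAne id
      simp only [id] at hbsup
      have hmA : m ∈ A := by rw [← hsup, hbsup]; exact hbA
      exact ⟨A.erase m, Finset.erase_subset_erase m hchain, Finset.insert_erase hmA⟩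
    · rintro ⟨B, hB, rfl⟩
      have hBP : B ⊆ pathSet m := hB.trans (Finset.erase_subset m _)
      have hchain : insert m B ⊆ pathSet m := Finset.insert_subset hself hBP
      refine ⟨⟨⟨hchain.trans hsetP, Finset.insert_nonempty _ _⟩, ?_⟩, hchain⟩
      refine le_antisymm (Finset.sup_le fun w hw => ?_) (Finset.le_sup (f := id)
        (Finset.mem_insert_self m B))
      rcases Finset.mem_insert.1 hw with rfl | hwB
      · exact le_rfl
      · exact pathSet_le (hBP hwB)
  rw [hset, Finset.sum_image]
  · have hmB : ∀ B ∈ ((pathSet m).erase m).powerset, m ∉ B := by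
      intro B hB hmB
      exact (Finset.notMem_erase m _) ((Finset.mem_powerset.1 hB) hmB)
    have hcard : ((pathSet m).erase m).card = d - 1 := by
      rw [Finset.card_erase_of_mem hself, card_pathSet]
    have key : ∀ k, k ≤ d → ((1 - p) * p) ^ k * (p ^ 2) ^ (d - k) = p ^ (2 * d) * ((1 - p) / p) ^ k := by
      intro k hk
      have h1 : (p ^ 2) ^ (d - k) = (p ^ 2) ^ d * ((p ^ 2) ^ k)⁻¹ :=
        pow_sub₀ _ (by positivity) hk
      have h2 : ((1 - p) * p) ^ k * ((p ^ 2) ^ k)⁻¹ = ((1 - p) / p) ^ k := by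
        rw [← inv_pow, ← mul_pow]
        congr 1
        field_simp
      rw [h1, ← pow_mul, mul_comm 2 d, ← h2]
      ring
    have step2 : ∀ B ∈ ((pathSet m).erase m).powerset,
        c (insert m B).card = p ^ (2 * d) * ((1 - p) / p) * U ^ 2 * ((1 - p) / p) ^ B.card := by
      intro B hB
      have hcB : (insert m B).card = B.card + 1 := Finset.card_insert_of_notMem (hmB B hB)
      have hkd : B.card + 1 ≤ d := by
        have := Finset.card_le_card (Finset.mem_powerset.1 hB)
        have hd1 : 1 ≤ d := by
          have := (depth_mem_Icc hm)
          simp only [Finset.mem_Icc] at this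
          exact this.1
        omega
      rw [hc]
      simp only
      rw [hcB, key _ hkd, pow_succ]
      ring
    rw [Finset.sum_congr rfl step2, ← Finset.mul_sum, mySumPowersetPowCard, hcard]
    have hd1 : 1 ≤ d := by
      have := (depth_mem_Icc hm)
      simp only [Finset.mem_Icc] at this
      exact this.1
    have hinv : (1 - p) / p + 1 = 1 / p := by field_simp; ring
    rw [hinv]
    have hsplit : p ^ (2 * d) = p ^ d * p ^ (d - 1) * p := by
      have h9 : 2 * d = d + (d - 1) + 1 := by omega
      rw [h9, pow_add, pow_add, pow_one]
    rw [div_pow, one_pow, hsplit]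
    have hpd : (p : ℝ) ^ (d - 1) ≠ 0 := by positivity
    field_simp
  · intro B1 hB1 B2 hB2 hins
    have h1 : m ∉ B1 := fun h => (Finset.notMem_erase m _) ((Finset.mem_powerset.1 hB1) h)
    have h2 : m ∉ B2 := fun h => (Finset.notMem_erase m _) ((Finset.mem_powerset.1 hB2) h)
    rw [← Finset.erase_insert h1, hins, Finset.erase_insert h2]

lemma varT_eq (p : ℝ) (hp0 : 0 < p) (hp1 : p < 1) (n : ℕ) :
    varT p n = (1 - p) * ∑ d ∈ Finset.Icc 1 n,
      (2 * p) ^ d * (∑ t ∈ Finset.range (n + 1 - d), (2 * p) ^ t) ^ 2 := by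
  have hmap : ∀ A ∈ (Eset n).powerset.filter (fun A => A.Nonempty), A.sup id ∈ Eset n := by
    intro A hA
    simp only [Finset.mem_filter, Finset.mem_powerset] at hA
    obtain ⟨b, hbA, hbsup⟩ := Finset.exists_mem_eq_sup A hA.2 id
    simp only [id] at hbsup
    rw [hbsup]
    exact hA.1 hbA
  unfold varT
  rw [← Finset.sum_fiberwise_of_maps_to hmap]
  rw [Finset.sum_congr rfl (fun m hm => fiber_sum_eq p hp0 hp1 n m hm)]
  rw [← Finset.sum_fiberwise_of_maps_to (fun m hm => depth_mem_Icc (n := n) hm)]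
  rw [Finset.mul_sum]
  refine Finset.sum_congr rfl fun d hd => ?_
  simp only [Finset.mem_Icc] at hd
  have step : ∀ m ∈ (Eset n).filter (fun m => depth m = d),
      (1 - p) * p ^ (depth m) * (∑ t ∈ Finset.range (n + 1 - depth m), (2 * p) ^ t) ^ 2
        = (1 - p) * p ^ d * (∑ t ∈ Finset.range (n + 1 - d), (2 * p) ^ t) ^ 2 := by
    intro m hm
    rw [(Finset.mem_filter.1 hm).2]
  rw [Finset.sum_congr rfl step, Finset.sum_const, depth_fiber_card n d hd.1 hd.2,
    nsmul_eq_mul, mul_pow]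
  push_cast
  ring

lemma key_formula (p : ℝ) (hp0 : 1 / 2 < p) (hp1 : p < 1) (n : ℕ) :
    ((2 * p) ^ (2 * n))⁻¹ * varT p n
      = (1 - p) / (2 * p - 1) ^ 2 *
          ((2 * p) ^ 2 * (2 * p)⁻¹ * (∑ i ∈ Finset.range n, ((2 * p)⁻¹) ^ i)
            - 2 * (2 * p) * ((n : ℝ) * ((2 * p)⁻¹) ^ n)
            + 2 * p * (((2 * p)⁻¹) ^ n - (((2 * p)⁻¹) ^ n) ^ 2) / (2 * p - 1)) := by
  rw [varT_eq p (by linarith) hp1 n]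
  obtain ⟨q, hqdef⟩ : ∃ q : ℝ, q = 2 * p := ⟨2 * p, rfl⟩
  rw [← hqdef]
  have hq1 : (1 : ℝ) < q := by rw [hqdef]; linarith
  have hq0 : (0 : ℝ) < q := by linarith
  have hqne : q ≠ 1 := by linarith
  have hqne0 : q ≠ 0 := by linarith
  have hq1ne : q - 1 ≠ 0 := by
    intro h
    have : q = 1 := by linarith
    exact hqne this
  have e1 : ∑ d ∈ Finset.Icc 1 n, q ^ d * (∑ t ∈ Finset.range (n + 1 - d), q ^ t) ^ 2
      = ∑ i ∈ Finset.range n, q ^ (1 + i) * ((q ^ (n - i) - 1) / (q - 1)) ^ 2 := by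
    rw [show Finset.Icc 1 n = Finset.Ico 1 (n + 1) by rw [Finset.Ico_add_one_right_eq_Icc],
      Finset.sum_Ico_eq_sum_range]
    refine Finset.sum_congr (by norm_num) fun i hi => ?_
    rw [geom_sum_eq hqne, show n + 1 - (1 + i) = n - i by omega]
  rw [e1]
  have e2 : ∀ i ∈ Finset.range n,
      q ^ (1 + i) * ((q ^ (n - i) - 1) / (q - 1)) ^ 2
        = (q ^ (2 * n)) * ((q ^ 2 * (q⁻¹) ^ (i + 1) - 2 * q * (q⁻¹) ^ n
            + ((q⁻¹) ^ n) ^ 2 * q ^ (i + 1)) / (q - 1) ^ 2) := by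
    intro i hi
    rw [Finset.mem_range] at hi
    obtain ⟨j, hj⟩ : ∃ j, n = i + j + 1 := ⟨n - i - 1, by omega⟩
    subst hj
    rw [show i + j + 1 - i = j + 1 by omega]
    simp only [pow_add, pow_mul, mul_pow, inv_pow]
    field_simp
    ring
  rw [Finset.sum_congr rfl e2, ← Finset.mul_sum]
  have e3 : ∑ i ∈ Finset.range n,
      ((q ^ 2 * (q⁻¹) ^ (i + 1) - 2 * q * (q⁻¹) ^ n + ((q⁻¹) ^ n) ^ 2 * q ^ (i + 1)) / (q - 1) ^ 2)
      = (q ^ 2 * q⁻¹ * (∑ i ∈ Finset.range n, (q⁻¹) ^ i)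
          - 2 * q * ((n : ℝ) * (q⁻¹) ^ n)
          + q * ((q⁻¹) ^ n - ((q⁻¹) ^ n) ^ 2) / (q - 1)) / (q - 1) ^ 2 := by
    rw [← Finset.sum_div]
    congr 1
    rw [Finset.sum_add_distrib, Finset.sum_sub_distrib]
    have eA : ∑ i ∈ Finset.range n, q ^ 2 * (q⁻¹) ^ (i + 1)
        = q ^ 2 * q⁻¹ * (∑ i ∈ Finset.range n, (q⁻¹) ^ i) := by
      rw [Finset.mul_sum]
      refine Finset.sum_congr rfl fun i _ => ?_
      rw [pow_succ]
      ring
    have eB : ∑ _i ∈ Finset.range n, 2 * q * (q⁻¹) ^ n = 2 * q * ((n : ℝ) * (q⁻¹) ^ n) := by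
      rw [Finset.sum_const, Finset.card_range, nsmul_eq_mul]
      ring
    have eC : ∑ i ∈ Finset.range n, ((q⁻¹) ^ n) ^ 2 * q ^ (i + 1)
        = q * ((q⁻¹) ^ n - ((q⁻¹) ^ n) ^ 2) / (q - 1) := by
      have : ∀ i ∈ Finset.range n, ((q⁻¹) ^ n) ^ 2 * q ^ (i + 1)
          = (((q⁻¹) ^ n) ^ 2 * q) * q ^ i := fun i _ => by rw [pow_succ]; ring
      rw [Finset.sum_congr rfl this, ← Finset.mul_sum, geom_sum_eq hqne]
      have hqn : (q⁻¹) ^ n * q ^ n = 1 := by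
        rw [← mul_pow, inv_mul_cancel₀ hqne0, one_pow]
      rw [← mul_div_assoc, div_eq_div_iff hq1ne hq1ne]
      linear_combination ((q - 1) * q * ((q⁻¹) ^ n)) * hqn
    rw [eA, eB, eC]
  rw [e3]
  have hq2n : (q ^ (2 * n)) ≠ 0 := by positivity
  field_simp

/-- for fixed p ∈ (1/2,1), (2p)^{−2n}·var_p(f_n) converges to
4p²(1−p)/(2p−1)³ as n → ∞, where var_p(f_n) = Σ_{∅≠A⊆B_n} ⟨f_n,Ψ_A⟩². -/
theorem tree_supercritical_variance_limit (p : ℝ) (hp0 : 1 / 2 < p) (hp1 : p < 1) :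
    Tendsto (fun n => ((2 * p) ^ (2 * n))⁻¹ * varT p n) atTop
      (nhds (4 * p ^ 2 * (1 - p) / (2 * p - 1) ^ 3)) := by
  have hq0 : (0:ℝ) < 2 * p := by linarith
  have hq1 : (1:ℝ) < 2 * p := by linarith
  have he0 : (0:ℝ) ≤ (2 * p)⁻¹ := by positivity
  have he1 : (2 * p)⁻¹ < 1 := by
    rw [inv_lt_one_iff₀]
    right
    exact hq1
  have h1 : Tendsto (fun n => ∑ i ∈ Finset.range n, ((2 * p)⁻¹) ^ i) atTop
      (nhds ((1 - (2 * p)⁻¹)⁻¹)) :=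
    (hasSum_geometric_of_abs_lt_one (by rwa [abs_of_nonneg he0])).tendsto_sum_nat
  have h2 : Tendsto (fun n : ℕ => (n : ℝ) * ((2 * p)⁻¹) ^ n) atTop (nhds 0) :=
    tendsto_self_mul_const_pow_of_lt_one he0 he1
  have h3 : Tendsto (fun n : ℕ => ((2 * p)⁻¹) ^ n) atTop (nhds 0) :=
    tendsto_pow_atTop_nhds_zero_of_lt_one he0 he1
  have hG : Tendsto (fun n : ℕ =>
      (1 - p) / (2 * p - 1) ^ 2 *
        ((2 * p) ^ 2 * (2 * p)⁻¹ * (∑ i ∈ Finset.range n, ((2 * p)⁻¹) ^ i)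
          - 2 * (2 * p) * ((n : ℝ) * ((2 * p)⁻¹) ^ n)
          + 2 * p * (((2 * p)⁻¹) ^ n - (((2 * p)⁻¹) ^ n) ^ 2) / (2 * p - 1))) atTop
      (nhds ((1 - p) / (2 * p - 1) ^ 2 *
        ((2 * p) ^ 2 * (2 * p)⁻¹ * (1 - (2 * p)⁻¹)⁻¹ - 2 * (2 * p) * 0
          + 2 * p * (0 - 0 ^ 2) / (2 * p - 1)))) := by
    refine Tendsto.const_mul _ ?_
    refine Tendsto.add (Tendsto.sub (Tendsto.const_mul _ h1) (Tendsto.const_mul _ h2)) ?_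
    exact Tendsto.div_const (Tendsto.const_mul _ (h3.sub (h3.pow 2))) _
  have hL : (1 - p) / (2 * p - 1) ^ 2 *
        ((2 * p) ^ 2 * (2 * p)⁻¹ * (1 - (2 * p)⁻¹)⁻¹ - 2 * (2 * p) * 0
          + 2 * p * (0 - 0 ^ 2) / (2 * p - 1))
      = 4 * p ^ 2 * (1 - p) / (2 * p - 1) ^ 3 := by
    have hqe : (2 * p : ℝ) ≠ 0 := by linarith
    have hq1e : (2 * p : ℝ) - 1 ≠ 0 := by intro h; nlinarith
    have hsub : (1 : ℝ) - (2 * p)⁻¹ = (2 * p - 1) / (2 * p) := by field_simp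
    rw [hsub]
    simp only [mul_zero, sub_zero, zero_pow two_ne_zero, zero_div, add_zero, inv_div]
    field_simp
    ring
  rw [hL] at hG
  exact hG.congr (fun n => (key_formula p hp0 hp1 n).symm)

end
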